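/- arXiv:0903.3514 — 10 statements merged into one kernel-verified Lean document; each statement's English description precedes it below -/
import Mathlib

section
/- Let X be a paracompact (Hausdorff) space and τ an infinite cardinal. Then l(X) ≤ τ if and only if every closed discrete subset of X has cardinality ≤ τ. -/
open Set Cardinal

universe u

/-- `lindelofLe X τ` means the Lindelöf number of `X` is at most `τ`: every open
cover of `X` has a subcover of cardinality `≤ τ`. -/
def lindelofLe (X : Type u) [TopologicalSpace X] (τ : Cardinal.{u}) : Prop :=
  ∀ 𝒰 : Set (Set X), (∀ U ∈ 𝒰, IsOpen U) → ⋃₀ 𝒰 = Set.univ →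
    ∃ 𝒱 ⊆ 𝒰, #↥𝒱 ≤ τ ∧ ⋃₀ 𝒱 = Set.univ

/-- `compactDegLe X τ` means the degree of compactness of `X` is at most `τ`:
every open cover of `X` has a subcover of cardinality `< τ`. -/
def compactDegLe (X : Type u) [TopologicalSpace X] (τ : Cardinal.{u}) : Prop :=
  ∀ 𝒰 : Set (Set X), (∀ U ∈ 𝒰, IsOpen U) → ⋃₀ 𝒰 = Set.univ →
    ∃ 𝒱 ⊆ 𝒰, #↥𝒱 < τ ∧ ⋃₀ 𝒱 = Set.univ

/-- The Lindelöf number `l(X)`. -/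
noncomputable def lNum (X : Type u) [TopologicalSpace X] : Cardinal.{u} :=
  sInf {τ | lindelofLe X τ}

/-- The degree of compactness `k(X)`. -/
noncomputable def kNum (X : Type u) [TopologicalSpace X] : Cardinal.{u} :=
  sInf {τ | compactDegLe X τ}

/-!
A closed discrete set `s` is covered by `sᶜ` together with open sets meeting `s` in one point
each; a subcover must keep all of the latter, so `#s ≤ l(X)`.

Conversely, given an open cover, take a locally finite open refinement `v` indexed by the cover
and pick a point in each nonempty `v U`. These points form a closed discrete set, since in a
T1 space every subset of it is a locally finite union of closed sets, and each point is picked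
only finitely often by point-finiteness. So there are at most `τ · ℵ₀ = τ` nonempty `v U`, and the
corresponding members of the cover form a subcover.
-/

namespace lindelofLe

variable {X : Type u} [TopologicalSpace X] {τ : Cardinal.{u}}

theorem mk_le_of_forall_subsingleton_inter (hl : lindelofLe X τ) {s : Set X} {𝒰 : Set (Set X)}
    (hUo : ∀ U ∈ 𝒰, IsOpen U) (hUc : ⋃₀ 𝒰 = Set.univ) (hUs : ∀ U ∈ 𝒰, (U ∩ s).Subsingleton) :
    #s ≤ τ := by
  obtain ⟨𝒱, h𝒱U, h𝒱τ, h𝒱c⟩ := hl 𝒰 hUo hUc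
  have hmem : ∀ x : s, ∃ V : 𝒱, (x : X) ∈ (V : Set X) := fun x => by
    obtain ⟨V, hV, hxV⟩ := mem_sUnion.1 (h𝒱c ▸ mem_univ (x : X))
    exact ⟨⟨V, hV⟩, hxV⟩
  choose f hf using hmem
  have hf_inj : Function.Injective f := fun x y hxy =>
    Subtype.ext <| hUs _ (h𝒱U (f x).2) ⟨hf x, x.2⟩ ⟨hxy ▸ hf y, y.2⟩
  exact (mk_le_of_injective hf_inj).trans h𝒱τ

theorem mk_le_of_isClosed_of_discreteTopology (hl : lindelofLe X τ) {s : Set X}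
    (hs : IsClosed s) (hd : DiscreteTopology s) : #s ≤ τ := by
  choose U hUo hUs using discreteTopology_subtype_iff'.1 hd
  refine hl.mk_le_of_forall_subsingleton_inter (𝒰 := insert sᶜ (range fun x : s => U x x.2))
    ?_ ?_ ?_
  · rintro _ (rfl | ⟨x, rfl⟩)
    exacts [hs.isOpen_compl, hUo x x.2]
  · refine eq_univ_of_forall fun p => ?_
    by_cases hp : p ∈ s
    · exact ⟨U p hp, Or.inr ⟨⟨p, hp⟩, rfl⟩, (hUs p hp).symm.subset rfl |>.1⟩
    · exact ⟨sᶜ, Or.inl rfl, hp⟩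
  · rintro _ (rfl | ⟨x, rfl⟩)
    · simp
    · simp [hUs x x.2]

end lindelofLe

namespace LocallyFinite

variable {X ι : Type u} [TopologicalSpace X] {f : ι → Set X} {x : ι → X}

theorem isClosed_of_subset_range [T1Space X] (hf : LocallyFinite f) (hx : ∀ i, x i ∈ f i)
    {t : Set X} (ht : t ⊆ range x) : IsClosed t := by
  have hlf : LocallyFinite fun i => t ∩ {x i} :=
    hf.subset fun i => inter_subset_right.trans (singleton_subset_iff.2 (hx i))
  convert hlf.isClosed_iUnion fun _ => isClosed_inter_singleton
  rw [← inter_iUnion, ← range_eq_iUnion, inter_eq_left.2 ht]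

theorem isDiscrete_range [T1Space X] (hf : LocallyFinite f) (hx : ∀ i, x i ∈ f i) :
    IsDiscrete (range x) :=
  isDiscrete_iff_forall_mem_exists_isClosed.2 fun t ht =>
    ⟨t, hf.isClosed_of_subset_range hx ht, inter_eq_left.2 ht⟩

theorem mk_le_mk_range_mul_aleph0 (hf : LocallyFinite f) (hx : ∀ i, x i ∈ f i) :
    #ι ≤ #(range x) * ℵ₀ := by
  refine mk_le_mk_mul_of_mk_preimage_le (rangeFactorization x) fun d => ?_
  have hfiber : rangeFactorization x ⁻¹' {d} ⊆ {i | (d : X) ∈ f i} := fun i hi => by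
    simpa [← congrArg Subtype.val hi] using hx i
  exact ((hf.point_finite d).subset hfiber).lt_aleph0.le

end LocallyFinite

theorem lindelofLe_of_forall_isClosed_discreteTopology {X : Type u} [TopologicalSpace X]
    [T1Space X] [ParacompactSpace X] {τ : Cardinal.{u}} (hτ : ℵ₀ ≤ τ)
    (h : ∀ s : Set X, IsClosed s → DiscreteTopology s → #s ≤ τ) : lindelofLe X τ := by
  intro 𝒰 hUo hUc
  obtain ⟨v, -, hvc, hvlf, hvU⟩ := precise_refinement (fun U : 𝒰 => (U : Set X))
    (fun U => hUo U U.2) (by rwa [← sUnion_eq_iUnion])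
  let J := {U : 𝒰 // (v U).Nonempty}
  choose x hx using fun j : J => j.2
  have hJlf : LocallyFinite fun j : J => v j := hvlf.comp_injective Subtype.val_injective
  have hJ : #J ≤ τ := calc
    #J ≤ #(range x) * ℵ₀ := hJlf.mk_le_mk_range_mul_aleph0 hx
    _ ≤ τ * τ := by
      gcongr
      exact h _ (hJlf.isClosed_of_subset_range hx subset_rfl)
        (hJlf.isDiscrete_range hx).to_subtype
    _ = τ := mul_eq_self hτ
  refine ⟨range fun j : J => (j.1 : Set X), ?_, mk_range_le.trans hJ, ?_⟩
  · rintro _ ⟨j, rfl⟩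
    exact j.1.2
  · refine eq_univ_of_forall fun p => ?_
    obtain ⟨U, hpU⟩ := mem_iUnion.1 (hvc ▸ mem_univ p)
    exact ⟨U, ⟨⟨U, p, hpU⟩, rfl⟩, hvU U hpU⟩

/-- for a paracompact Hausdorff space `X` and infinite `τ`,
`l(X) ≤ τ` iff every closed discrete subset of `X` has cardinality `≤ τ`. -/
theorem stmt1 (X : Type u) [TopologicalSpace X] [T2Space X] [ParacompactSpace X]
    (τ : Cardinal.{u}) (hτ : ℵ₀ ≤ τ) :
    lindelofLe X τ ↔ ∀ s : Set X, IsClosed s → DiscreteTopology s → #↥s ≤ τ :=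
  ⟨fun hl _ hs hd => hl.mk_le_of_isClosed_of_discreteTopology hs hd,
    lindelofLe_of_forall_isClosed_discreteTopology hτ⟩
end

section
/- Let X be a paracompact (Hausdorff) space and τ an infinite cardinal. Then k(X) ≤ τ if and only if every closed discrete subset of X has cardinality < τ. -/
open Set Cardinal

universe u

/-!
A closed discrete set `s` is covered by `sᶜ` together with open sets meeting `s` in one point;
every member of this cover meets `s` in at most one point, so a subcover has at least `#s`
members. Conversely, take a locally finite open refinement of a cover and pick a point in each
nonempty member: the chosen points form a closed discrete set, and each point is chosen for only
finitely many members, so (as `τ` is infinite) there are fewer than `τ` nonempty members, and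
the sets they refine form the subcover.
-/

theorem Cardinal.mk_le_mk_of_subset_sUnion {α : Type*} {s : Set α} {𝒱 : Set (Set α)}
    (hcov : s ⊆ ⋃₀ 𝒱) (h𝒱 : ∀ V ∈ 𝒱, (V ∩ s).Subsingleton) : #s ≤ #𝒱 := by
  have hmem : ∀ x : s, ∃ V : 𝒱, (x : α) ∈ (V : Set α) := fun x => by
    obtain ⟨V, hV, hxV⟩ := hcov x.2
    exact ⟨⟨V, hV⟩, hxV⟩
  choose f hf using hmem
  refine mk_le_of_injective (f := f) fun x y hxy => Subtype.ext ?_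
  have hy : (y : α) ∈ (f x : Set α) := hxy ▸ hf y
  exact h𝒱 _ (f x).2 ⟨hf x, x.2⟩ ⟨hy, y.2⟩

theorem Cardinal.mk_lt_of_finite_fibers {α β : Type u} {τ : Cardinal.{u}} (hτ : ℵ₀ ≤ τ)
    {f : α → β} (hf : ∀ b, (f ⁻¹' {b}).Finite) (hrange : #(range f) < τ) : #α < τ := by
  by_cases hfin : (range f).Finite
  · have : (Set.univ : Set α).Finite := by
      simpa only [preimage_range] using hfin.preimage' fun b _ => hf b
    exact (lt_aleph0_iff_finite.2 (finite_univ_iff.1 this)).trans_le hτ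
  · have hinf : ℵ₀ ≤ #(range f) := aleph0_le_mk_iff.2 (infinite_coe_iff.2 hfin)
    calc #α ≤ #(range f) * ℵ₀ :=
          mk_le_mk_mul_of_mk_preimage_le (rangeFactorization f) fun b =>
            ((hf b).subset fun a ha => (rangeFactorization_eq_iff a b).1 ha).lt_aleph0.le
      _ = #(range f) := mul_eq_left hinf hinf aleph0_ne_zero
      _ < τ := hrange

theorem isClosed_and_isDiscrete_of_forall_subset_isClosed {X : Type*} [TopologicalSpace X]
    {S : Set X} (h : ∀ s ⊆ S, IsClosed s) : IsClosed S ∧ IsDiscrete S :=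
  ⟨h S subset_rfl, isDiscrete_iff_forall_mem_exists_isClosed.2 fun s hs =>
    ⟨s, h s hs, inter_eq_left.2 hs⟩⟩

theorem LocallyFinite.isClosed_and_isDiscrete_range {ι X : Type*} [TopologicalSpace X]
    [T1Space X] {x : ι → X} (hx : LocallyFinite fun i => ({x i} : Set X)) :
    IsClosed (range x) ∧ IsDiscrete (range x) := by
  refine isClosed_and_isDiscrete_of_forall_subset_isClosed fun s hs => ?_
  have hs_eq : s = ⋃ i : x ⁻¹' s, {x i} := by
    ext y
    simp only [mem_iUnion, mem_singleton_iff, Subtype.exists, mem_preimage]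
    exact ⟨fun hy => by obtain ⟨i, rfl⟩ := hs hy; exact ⟨i, hy, rfl⟩,
      by rintro ⟨i, hi, rfl⟩; exact hi⟩
  rw [hs_eq]
  exact (hx.comp_injective Subtype.val_injective).isClosed_iUnion fun _ => isClosed_singleton

theorem compactDegLe.mk_lt_of_isClosed_of_discreteTopology {X : Type u} [TopologicalSpace X]
    {τ : Cardinal.{u}} (hX : compactDegLe X τ) {s : Set X} (hs : IsClosed s)
    (hd : DiscreteTopology s) : #s < τ := by
  set 𝒰 : Set (Set X) := {U | IsOpen U ∧ (U ∩ s).Subsingleton}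
  have hcover : ⋃₀ 𝒰 = Set.univ := by
    refine eq_univ_of_forall fun y => ?_
    by_cases hy : y ∈ s
    · obtain ⟨U, hU, hUs⟩ :=
        isDiscrete_iff_forall_mem_exists_isOpen.1 (isDiscrete_iff_discreteTopology.2 hd) y hy
      have hyU : y ∈ U ∩ s := hUs ▸ mem_singleton y
      exact ⟨U, ⟨hU, hUs ▸ subsingleton_singleton⟩, hyU.1⟩
    · exact ⟨sᶜ, ⟨hs.isOpen_compl, by simp⟩, hy⟩
  obtain ⟨𝒱, h𝒱𝒰, h𝒱τ, h𝒱⟩ := hX 𝒰 (fun U hU => hU.1) hcover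
  calc #s ≤ #𝒱 := mk_le_mk_of_subset_sUnion (h𝒱 ▸ subset_univ s) fun V hV => (h𝒱𝒰 hV).2
    _ < τ := h𝒱τ

theorem LocallyFinite.mk_setOf_nonempty_lt {ι X : Type u} [TopologicalSpace X] [T1Space X]
    {τ : Cardinal.{u}} (hτ : ℵ₀ ≤ τ)
    (hX : ∀ s : Set X, IsClosed s → DiscreteTopology s → #s < τ)
    {v : ι → Set X} (hv : LocallyFinite v) : #{i | (v i).Nonempty} < τ := by
  choose x hx using fun i : {i | (v i).Nonempty} => i.2
  have hv' : LocallyFinite fun i : {i | (v i).Nonempty} => v i :=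
    hv.comp_injective Subtype.val_injective
  obtain ⟨hclosed, hdiscrete⟩ :=
    (hv'.subset fun i => singleton_subset_iff.2 (hx i)).isClosed_and_isDiscrete_range
  refine mk_lt_of_finite_fibers hτ (fun y => (hv'.point_finite y).subset ?_)
    (hX _ hclosed (isDiscrete_iff_discreteTopology.1 hdiscrete))
  rintro i (rfl : x i = y)
  exact hx i

theorem compactDegLe_of_forall_isClosed_discreteTopology {X : Type u} [TopologicalSpace X]
    [T1Space X] [ParacompactSpace X] {τ : Cardinal.{u}} (hτ : ℵ₀ ≤ τ)
    (hX : ∀ s : Set X, IsClosed s → DiscreteTopology s → #s < τ) : compactDegLe X τ := by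
  intro 𝒰 h𝒰 hcover
  obtain ⟨v, -, hvcover, hv, hvU⟩ := precise_refinement (fun U : 𝒰 => (U : Set X))
    (fun U => h𝒰 U U.2) (sUnion_eq_iUnion ▸ hcover)
  refine ⟨(↑) '' {U | (v U).Nonempty}, by rintro _ ⟨U, -, rfl⟩; exact U.2,
    mk_image_le.trans_lt (hv.mk_setOf_nonempty_lt hτ hX), eq_univ_of_forall fun y => ?_⟩
  obtain ⟨U, hyU⟩ := mem_iUnion.1 (hvcover ▸ mem_univ y)
  exact ⟨U, ⟨U, ⟨y, hyU⟩, rfl⟩, hvU U hyU⟩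

/-- for a paracompact Hausdorff space `X` and infinite `τ`,
`k(X) ≤ τ` iff every closed discrete subset of `X` has cardinality `< τ`. -/
theorem stmt2 (X : Type u) [TopologicalSpace X] [T2Space X] [ParacompactSpace X]
    (τ : Cardinal.{u}) (hτ : ℵ₀ ≤ τ) :
    compactDegLe X τ ↔ ∀ s : Set X, IsClosed s → DiscreteTopology s → #↥s < τ :=
  ⟨fun hX _ hs hd => hX.mk_lt_of_isClosed_of_discreteTopology hs hd,
    compactDegLe_of_forall_isClosed_discreteTopology hτ⟩
end

section
/- Let X be a metrizable space and τ an infinite cardinal that is not of countable cofinality (not sequential). Then l(X) ≤ τ if and only if the weight w(X) ≤ τ. -/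
open Set Cardinal

universe u

/-- The weight of a topological space: the least cardinality of a base. -/
noncomputable def weightCard (X : Type u) [TopologicalSpace X] : Cardinal.{u} :=
  sInf {c | ∃ B : Set (Set X), TopologicalSpace.IsTopologicalBasis B ∧ #↥B = c}

/-! In a metric space `X` with `l(X) ≤ τ`, cover `X` by `τ` balls of radius `1 / (n + 1)` for each
`n`; these countably many families together form a basis of `ℵ₀ · τ = τ` sets. Conversely, from a
basis `B` with `#B ≤ τ`, every open cover has a subcover indexed by the basic sets lying in some
member of the cover. -/

open TopologicalSpace Metric

universe v

theorem Cardinal.mk_iUnion_le_of_countable {α : Type u} {ι : Type v} [Countable ι]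
    {c : Cardinal.{u}} (hc : ℵ₀ ≤ c) (f : ι → Set α) (hf : ∀ i, #(f i) ≤ c) :
    #(⋃ i, f i) ≤ c := by
  rw [← lift_le.{v}]
  calc lift.{v} #(⋃ i, f i) ≤ lift.{u} #ι * ⨆ i, lift.{v} #(f i) := mk_iUnion_le_lift f
    _ ≤ lift.{v} c * lift.{v} c :=
        mul_le_mul' (mk_le_aleph0.trans (aleph0_le_lift.2 hc)) (ciSup_le' fun i ↦ lift_le.2 (hf i))
    _ = lift.{v} c := mul_eq_self (aleph0_le_lift.2 hc)

section Weight

variable {X : Type u} [TopologicalSpace X]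

theorem TopologicalSpace.IsTopologicalBasis.weightCard_le {B : Set (Set X)}
    (hB : IsTopologicalBasis B) : weightCard X ≤ #B :=
  csInf_le' ⟨B, hB, rfl⟩

theorem exists_isTopologicalBasis_mk_eq_weightCard :
    ∃ B : Set (Set X), IsTopologicalBasis B ∧ #B = weightCard X :=
  csInf_mem (s := {c | ∃ B : Set (Set X), IsTopologicalBasis B ∧ #B = c})
    ⟨_, {s | IsOpen s}, isTopologicalBasis_opens, rfl⟩

theorem TopologicalSpace.IsTopologicalBasis.lindelofLe {B : Set (Set X)}
    (hB : IsTopologicalBasis B) {τ : Cardinal.{u}} (hBτ : #B ≤ τ) : lindelofLe X τ := by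
  intro 𝒰 h𝒰 hcov
  have hpick : ∀ b : {b ∈ B | ∃ U ∈ 𝒰, b ⊆ U}, ∃ U ∈ 𝒰, (b : Set X) ⊆ U := fun b ↦ b.2.2
  choose f hf𝒰 hbf using hpick
  refine ⟨range f, range_subset_iff.2 hf𝒰, ?_, ?_⟩
  · exact mk_range_le.trans ((mk_le_mk_of_subset (sep_subset _ _)).trans hBτ)
  · refine eq_univ_of_forall fun x ↦ ?_
    obtain ⟨U, hU, hxU⟩ := mem_sUnion.1 (hcov ▸ mem_univ x)
    obtain ⟨b, hb, hxb, hbU⟩ := hB.exists_subset_of_mem_open hxU (h𝒰 U hU)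
    exact ⟨_, mem_range_self ⟨b, hb, U, hU, hbU⟩, hbf _ hxb⟩

end Weight

section PseudoMetric

variable {X : Type u} [PseudoMetricSpace X]

theorem exists_ball_subcover_of_lindelofLe {τ : Cardinal.{u}} (hl : lindelofLe X τ) {ε : ℝ}
    (hε : 0 < ε) : ∃ 𝒱 ⊆ range (ball · ε : X → Set X), #𝒱 ≤ τ ∧ ⋃₀ 𝒱 = Set.univ :=
  hl _ (forall_mem_range.2 fun _ ↦ isOpen_ball) <|
    eq_univ_of_forall fun x ↦ mem_sUnion.2 ⟨_, mem_range_self x, mem_ball_self hε⟩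

theorem isTopologicalBasis_iUnion_of_ball_covers {𝒱 : ℕ → Set (Set X)}
    (h𝒱 : ∀ n, 𝒱 n ⊆ range (ball · (1 / (n + 1)))) (hcov : ∀ n, ⋃₀ 𝒱 n = Set.univ) :
    IsTopologicalBasis (⋃ n, 𝒱 n) := by
  refine isTopologicalBasis_of_isOpen_of_nhds ?_ fun x U hxU hU ↦ ?_
  · simp only [mem_iUnion]
    rintro _ ⟨n, hV⟩
    obtain ⟨y, rfl⟩ := h𝒱 n hV
    exact isOpen_ball
  obtain ⟨ε, hε, hεU⟩ := Metric.isOpen_iff.1 hU x hxU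
  obtain ⟨n, hn⟩ := exists_nat_one_div_lt (half_pos hε)
  obtain ⟨V, hV, hxV⟩ := mem_sUnion.1 (hcov n ▸ mem_univ x)
  obtain ⟨y, rfl⟩ := h𝒱 n hV
  refine ⟨_, mem_iUnion.2 ⟨n, hV⟩, hxV, (ball_subset_ball' ?_).trans hεU⟩
  rw [dist_comm]
  linarith [mem_ball.1 hxV]

theorem exists_isTopologicalBasis_mk_le_of_lindelofLe {τ : Cardinal.{u}} (hl : lindelofLe X τ)
    (hτ : ℵ₀ ≤ τ) : ∃ B : Set (Set X), IsTopologicalBasis B ∧ #B ≤ τ := by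
  choose 𝒱 h𝒱 h𝒱τ hcov using fun n : ℕ ↦
    exists_ball_subcover_of_lindelofLe hl (ε := 1 / (n + 1)) (by positivity)
  exact ⟨_, isTopologicalBasis_iUnion_of_ball_covers h𝒱 hcov,
    mk_iUnion_le_of_countable hτ 𝒱 h𝒱τ⟩

end PseudoMetric

theorem stmt4_general (X : Type u) [TopologicalSpace X] [TopologicalSpace.MetrizableSpace X]
    (τ : Cardinal.{u}) (hτ : ℵ₀ ≤ τ) :
    lindelofLe X τ ↔ weightCard X ≤ τ := by
  let := TopologicalSpace.metrizableSpaceMetric X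
  refine ⟨fun hl ↦ ?_, fun hw ↦ ?_⟩
  · obtain ⟨B, hB, hBτ⟩ := exists_isTopologicalBasis_mk_le_of_lindelofLe hl hτ
    exact hB.weightCard_le.trans hBτ
  · obtain ⟨B, hB, hBw⟩ := exists_isTopologicalBasis_mk_eq_weightCard (X := X)
    exact hB.lindelofLe (hBw.trans_le hw)

/-- for a metrizable space `X` and an infinite non-sequential
cardinal `τ`, `l(X) ≤ τ` iff `w(X) ≤ τ`. -/
theorem stmt4 (X : Type u) [TopologicalSpace X] [TopologicalSpace.MetrizableSpace X]
    (τ : Cardinal.{u}) (hτ : ℵ₀ ≤ τ)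
    (hns : ¬ (Order.IsSuccLimit τ ∧ (Cardinal.ord τ).cof = ℵ₀)) :
    lindelofLe X τ ↔ weightCard X ≤ τ :=
  stmt4_general X τ hτ
end

section
/- Let X be a regular topological space in which every open cover of cardinality ≤ τ has a subcover of cardinality < τ, where τ is a limit cardinal, and suppose k(Y) < τ for every closed subspace Y of X contained in the complement of a subspace Z that is paracompact in X with k(Z) ≤ τ. Then k(X) ≤ τ. -/
/-!
Fewer than `τ` members of an open cover already cover `Z`. What they miss is a closed set
`Y ⊆ X \ Z`, which fewer than `k(Y) < τ` further members cover; as `τ` is infinite, the two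
families together still have fewer than `τ` members.
-/

open Set Cardinal

universe u

/-- A subspace `Z` is paracompact in `X`. -/
def ParacompactIn {X : Type u} [TopologicalSpace X] (Z : Set X) : Prop :=
  ∀ (M : Type u) (W : M → Set X), (∀ μ, IsOpen (W μ)) → Z ⊆ ⋃ μ, W μ →
    ∃ W' : M → Set X, (∀ μ, IsOpen (W' μ)) ∧ (∀ μ, W' μ ⊆ W μ) ∧
      (Z ⊆ ⋃ μ, W' μ) ∧ LocallyFinite W'

theorem compactDegLe.exists_subcover_of_subset_sUnion {X : Type u} [TopologicalSpace X]
    {S : Set X} {σ : Cardinal.{u}} (h : compactDegLe S σ) {𝒰 : Set (Set X)}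
    (hopen : ∀ U ∈ 𝒰, IsOpen U) (hcov : S ⊆ ⋃₀ 𝒰) : ∃ 𝒱 ⊆ 𝒰, #𝒱 < σ ∧ S ⊆ ⋃₀ 𝒱 := by
  let trace : Set X → Set S := preimage (↑)
  have htrace_cover : ⋃₀ (trace '' 𝒰) = Set.univ := eq_univ_of_forall fun x =>
    let ⟨U, hU, hxU⟩ := hcov x.2
    ⟨trace U, mem_image_of_mem _ hU, hxU⟩
  obtain ⟨𝒲, h𝒲, h𝒲card, h𝒲cover⟩ := h (trace '' 𝒰)
    (forall_mem_image.2 fun U hU => (hopen U hU).preimage continuous_subtype_val) htrace_cover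
  obtain ⟨𝒱, h𝒱, hbij⟩ := SurjOn.exists_bijOn_subset (f := trace) h𝒲
  refine ⟨𝒱, h𝒱, ?_, fun x hx => ?_⟩
  · rwa [← hbij.image_eq, mk_image_eq_of_injOn _ _ hbij.injOn] at h𝒲card
  · obtain ⟨W, hW, hxW⟩ := h𝒲cover.symm ▸ mem_univ (⟨x, hx⟩ : S)
    obtain ⟨V, hV, rfl⟩ := hbij.surjOn hW
    exact ⟨V, hV, hxW⟩

theorem compactDegLe_kNum (X : Type u) [TopologicalSpace X] : compactDegLe X (kNum X) :=
  csInf_mem (s := {τ | compactDegLe X τ}) ⟨Order.succ #(Set X), fun 𝒰 _ h𝒰 =>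
    ⟨𝒰, subset_rfl, (mk_set_le _).trans_lt (Order.lt_succ _), h𝒰⟩⟩

theorem stmt5_general (X : Type u) [TopologicalSpace X] (τ : Cardinal.{u})
    (hlim : Order.IsSuccLimit τ)
    (Z : Set X) (hkZ : compactDegLe ↥Z τ)
    (hY : ∀ Y : Set X, IsClosed Y → Y ⊆ Zᶜ → kNum ↥Y < τ) :
    compactDegLe X τ := by
  intro 𝒰 hopen hcover
  obtain ⟨𝒱₀, h𝒱₀, h𝒱₀card, hZ𝒱₀⟩ :=
    hkZ.exists_subcover_of_subset_sUnion hopen (hcover ▸ subset_univ Z)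
  set Y := (⋃₀ 𝒱₀)ᶜ
  have hYclosed : IsClosed Y := (isOpen_sUnion fun V hV => hopen V (h𝒱₀ hV)).isClosed_compl
  have hkY : kNum Y < τ := hY Y hYclosed (compl_subset_compl.2 hZ𝒱₀)
  obtain ⟨𝒱₁, h𝒱₁, h𝒱₁card, hY𝒱₁⟩ :=
    (compactDegLe_kNum Y).exists_subcover_of_subset_sUnion hopen (hcover ▸ subset_univ Y)
  refine ⟨𝒱₀ ∪ 𝒱₁, union_subset h𝒱₀ h𝒱₁, ?_, ?_⟩
  · exact (mk_union_le _ _).trans_lt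
      (add_lt_of_lt (aleph0_le_of_isSuccLimit hlim) h𝒱₀card (h𝒱₁card.trans hkY))
  · rw [sUnion_union, ← compl_subset_iff_union]
    exact hY𝒱₁

/-- if `X` is regular, every open cover of `X` of cardinality `≤ τ`
has a subcover of cardinality `< τ`, `τ` is a limit cardinal, `Z` is paracompact
in `X` with `k(Z) ≤ τ`, and `k(Y) < τ` for every closed `Y ⊆ X \ Z`, then
`k(X) ≤ τ`. -/
theorem stmt5 (X : Type u) [TopologicalSpace X] [RegularSpace X] (τ : Cardinal.{u})
    (hlim : Order.IsSuccLimit τ)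
    (hcov : ∀ 𝒰 : Set (Set X), (∀ U ∈ 𝒰, IsOpen U) → ⋃₀ 𝒰 = Set.univ → #↥𝒰 ≤ τ →
      ∃ 𝒱 ⊆ 𝒰, #↥𝒱 < τ ∧ ⋃₀ 𝒱 = Set.univ)
    (Z : Set X) (hZ : ParacompactIn Z) (hkZ : compactDegLe ↥Z τ)
    (hY : ∀ Y : Set X, IsClosed Y → Y ⊆ Zᶜ → kNum ↥Y < τ) :
    compactDegLe X τ :=
  stmt5_general X τ hlim Z hkZ hY
end

section
/- Let X and Y be topological spaces, τ an infinite cardinal, and θ : X → (nonempty subsets of Y) an upper semi-continuous set-valued mapping with θ(X) = Y. If l(X) ≤ τ and l(θ(x)) ≤ τ for every x ∈ X, then l(Y) ≤ τ. -/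
open Set Cardinal

universe u

/-- Lindelöf number of a subset: `l(S) ≤ τ`. -/
def lindelofSetLe {Y : Type u} [TopologicalSpace Y] (S : Set Y) (τ : Cardinal.{u}) : Prop :=
  ∀ 𝒰 : Set (Set Y), (∀ U ∈ 𝒰, IsOpen U) → S ⊆ ⋃₀ 𝒰 →
    ∃ 𝒱 ⊆ 𝒰, #↥𝒱 ≤ τ ∧ S ⊆ ⋃₀ 𝒱

/-! For each `x`, cover `θ x` by at most `τ` members of the given cover. Upper semicontinuity
makes the set of points whose image lies in that union an open neighbourhood of `x`; at most `τ`
of these neighbourhoods cover `X`, and the corresponding `τ · τ = τ` members of the cover then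
cover `Y = θ(X)`. -/

theorem isOpen_setOf_subset_of_upperSemicontinuous {X Y : Type*} [TopologicalSpace X]
    [TopologicalSpace Y] {θ : X → Set Y}
    (husc : ∀ H : Set Y, IsClosed H → IsClosed {x | ((θ x) ∩ H).Nonempty})
    {V : Set Y} (hV : IsOpen V) : IsOpen {x | θ x ⊆ V} := by
  have hcompl : {x | θ x ⊆ V} = {x | (θ x ∩ Vᶜ).Nonempty}ᶜ := by
    ext x
    simp [Set.subset_def, Set.Nonempty]
  rw [hcompl]
  exact (husc _ hV.isClosed_compl).isOpen_compl

theorem lindelofLe.exists_card_le_biUnion_eq_univ {X : Type u} [TopologicalSpace X]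
    {τ : Cardinal.{u}} (hX : lindelofLe X τ) {W : X → Set X} (hW : ∀ x, IsOpen (W x))
    (hmem : ∀ x, x ∈ W x) : ∃ S : Set X, #S ≤ τ ∧ ⋃ x ∈ S, W x = Set.univ := by
  obtain ⟨𝒯, h𝒯W, h𝒯card, h𝒯cov⟩ := hX (range W) (forall_mem_range.2 hW)
    (eq_univ_of_forall fun x => ⟨W x, mem_range_self x, hmem x⟩)
  choose g hg using fun t : 𝒯 => h𝒯W t.2
  refine ⟨range g, mk_range_le.trans h𝒯card, eq_univ_of_forall fun x => ?_⟩
  obtain ⟨t, ht, hxt⟩ := h𝒯cov ▸ mem_univ x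
  exact mem_biUnion (mem_range_self ⟨t, ht⟩) ((hg ⟨t, ht⟩).symm ▸ hxt)

theorem mk_biUnion_le_of_aleph0_le {ι α : Type u} {τ : Cardinal.{u}} (hτ : ℵ₀ ≤ τ)
    {A : ι → Set α} {s : Set ι} (hs : #s ≤ τ) (hA : ∀ i ∈ s, #(A i) ≤ τ) :
    #(⋃ i ∈ s, A i) ≤ τ :=
  calc #(⋃ i ∈ s, A i) ≤ #s * ⨆ i : s, #(A i) := mk_biUnion_le A s
    _ ≤ τ * τ := mul_le_mul' hs (ciSup_le' fun i => hA i i.2)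
    _ = τ := mul_eq_self hτ

theorem stmt6_general (X Y : Type u) [TopologicalSpace X] [TopologicalSpace Y]
    (τ : Cardinal.{u}) (hτ : ℵ₀ ≤ τ) (θ : X → Set Y)
    (husc : ∀ H : Set Y, IsClosed H → IsClosed {x | ((θ x) ∩ H).Nonempty})
    (hsurj : ⋃ x, θ x = Set.univ)
    (hX : lindelofLe X τ)
    (hx : ∀ x, lindelofSetLe (θ x) τ) :
    lindelofLe Y τ := by
  intro 𝒰 hopen hcov
  choose 𝒱 h𝒱𝒰 h𝒱card h𝒱cov using fun x => hx x 𝒰 hopen (hcov ▸ subset_univ _)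
  obtain ⟨S, hScard, hScov⟩ := hX.exists_card_le_biUnion_eq_univ
    (fun x => isOpen_setOf_subset_of_upperSemicontinuous husc
      (isOpen_sUnion fun U hU => hopen U (h𝒱𝒰 x hU)))
    h𝒱cov
  refine ⟨⋃ x ∈ S, 𝒱 x, iUnion₂_subset fun x _ => h𝒱𝒰 x,
    mk_biUnion_le_of_aleph0_le hτ hScard fun x _ => h𝒱card x, eq_univ_of_forall fun y => ?_⟩
  obtain ⟨x₀, hy⟩ := mem_iUnion.1 (hsurj ▸ mem_univ y)
  obtain ⟨x, hxS, hx₀⟩ := mem_iUnion₂.1 (hScov ▸ mem_univ x₀)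
  obtain ⟨U, hU, hyU⟩ := (hx₀ : θ x₀ ⊆ ⋃₀ 𝒱 x) hy
  exact ⟨U, mem_iUnion₂.2 ⟨x, hxS, hU⟩, hyU⟩

/-- if `θ : X → Y` is an upper semi-continuous nonempty-set-valued
mapping onto `Y`, `l(X) ≤ τ` and `l(θ(x)) ≤ τ` for all `x`, then `l(Y) ≤ τ`. -/
theorem stmt6 (X Y : Type u) [TopologicalSpace X] [TopologicalSpace Y]
    (τ : Cardinal.{u}) (hτ : ℵ₀ ≤ τ) (θ : X → Set Y)
    (hne : ∀ x, (θ x).Nonempty)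
    (husc : ∀ H : Set Y, IsClosed H → IsClosed {x | ((θ x) ∩ H).Nonempty})
    (hsurj : ⋃ x, θ x = Set.univ)
    (hX : lindelofLe X τ)
    (hx : ∀ x, lindelofSetLe (θ x) τ) :
    lindelofLe Y τ :=
  stmt6_general X Y τ hτ θ husc hsurj hX hx
end

section
/- Let X be a regular space and τ an infinite cardinal such that every open cover of X has a subcover of cardinality < τ. Then for every lower semi-continuous mapping θ from X into a discrete space Y there exists a lower semi-continuous set-valued selection φ of θ with |φ(X)| < τ; moreover one can take φ(x) = Z ∩ θ(x) for a fixed subset Z ⊆ Y with |Z| < τ. -/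
open Set Cardinal

universe u

/-! The sets `{x | y ∈ θ x}`, `y : Y`, form an open cover of `X`; the indices `Z` of a subcover
of size `< τ` give the selection `x ↦ Z ∩ θ x`, which is again lower semi-continuous because
each `{x | y ∈ Z ∩ θ x}` is either `{x | y ∈ θ x}` or empty. -/

theorem compactDegLe.exists_subcover {X ι : Type u} [TopologicalSpace X] {τ : Cardinal.{u}}
    (hk : compactDegLe X τ) (U : ι → Set X) (hU : ∀ i, IsOpen (U i)) (hcov : ∀ x, ∃ i, x ∈ U i) :
    ∃ Z : Set ι, #Z < τ ∧ ∀ x, ∃ i ∈ Z, x ∈ U i := by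
  obtain ⟨𝒱, h𝒱U, h𝒱τ, h𝒱cov⟩ := hk (range U) (forall_mem_range.2 hU)
    (eq_univ_of_forall fun x => mem_sUnion_of_mem (hcov x).choose_spec (mem_range_self _))
  choose index hindex using fun V : 𝒱 => h𝒱U V.2
  refine ⟨range index, mk_range_le.trans_lt h𝒱τ, fun x => ?_⟩
  obtain ⟨V, hV, hxV⟩ := (h𝒱cov ▸ mem_univ x : x ∈ ⋃₀ 𝒱)
  exact ⟨index ⟨V, hV⟩, mem_range_self _, (hindex ⟨V, hV⟩).symm ▸ hxV⟩

theorem isOpen_setOf_mem_inter {X Y : Type*} [TopologicalSpace X] {θ : X → Set Y}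
    (hθ : ∀ y, IsOpen {x | y ∈ θ x}) (Z : Set Y) (y : Y) : IsOpen {x | y ∈ Z ∩ θ x} := by
  by_cases hy : y ∈ Z
  · simpa [hy] using hθ y
  · simp [hy]

theorem stmt8_general (X Y : Type u) [TopologicalSpace X]
    (τ : Cardinal.{u}) (hk : compactDegLe X τ)
    (θ : X → Set Y) (hne : ∀ x, (θ x).Nonempty)
    (hlsc : ∀ y : Y, IsOpen {x | y ∈ θ x}) :
    ∃ φ : X → Set Y, (∀ x, φ x ⊆ θ x) ∧ (∀ x, (φ x).Nonempty) ∧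
      (∀ y : Y, IsOpen {x | y ∈ φ x}) ∧ #↥(⋃ x, φ x) < τ ∧
      ∃ Z : Set Y, #↥Z < τ ∧ ∀ x, φ x = Z ∩ θ x := by
  obtain ⟨Z, hZτ, hZcov⟩ := hk.exists_subcover (fun y => {x | y ∈ θ x}) hlsc
    fun x => (hne x).imp fun _ hy => hy
  refine ⟨fun x => Z ∩ θ x, fun x => inter_subset_right, hZcov,
    isOpen_setOf_mem_inter hlsc Z, ?_, Z, hZτ, fun x => rfl⟩
  exact (mk_le_mk_of_subset (iUnion_subset fun x => inter_subset_left)).trans_lt hZτ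

/-- if `X` is regular and every open cover of `X` has a subcover of
cardinality `< τ`, then every lower semi-continuous map `θ` into a discrete
space `Y` has a lower semi-continuous set-valued selection `φ` with
`|φ(X)| < τ`, of the form `φ(x) = Z ∩ θ(x)` for a fixed `Z ⊆ Y`, `|Z| < τ`. -/
theorem stmt8 (X Y : Type u) [TopologicalSpace X] [RegularSpace X]
    [TopologicalSpace Y] [DiscreteTopology Y]
    (τ : Cardinal.{u}) (hτ : ℵ₀ ≤ τ) (hk : compactDegLe X τ)
    (θ : X → Set Y) (hne : ∀ x, (θ x).Nonempty)
    (hlsc : ∀ y : Y, IsOpen {x | y ∈ θ x}) :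
    ∃ φ : X → Set Y, (∀ x, φ x ⊆ θ x) ∧ (∀ x, (φ x).Nonempty) ∧
      (∀ y : Y, IsOpen {x | y ∈ φ x}) ∧ #↥(⋃ x, φ x) < τ ∧
      ∃ Z : Set Y, #↥Z < τ ∧ ∀ x, φ x = Z ∩ θ x :=
  stmt8_general X Y τ hk θ hne hlsc
end

section
/- Let X be a topological space and τ an infinite cardinal. Suppose that for every lower semi-continuous mapping θ from X into a discrete space Y there exists a set-valued selection g of θ with |g(X)| < τ. Then every open cover of X has a refinement of cardinality < τ (indeed a subcover after taking the original sets), i.e., k(X) ≤ τ. -/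
/-!
Apply the hypothesis to the membership map `x ↦ {U ∈ 𝒰 | x ∈ U}` of an open cover `𝒰`, with `𝒰`
discrete: it is lower semi-continuous because the members of `𝒰` are open, and the values taken
by any selection of it form a subcover.
-/

open Set Cardinal

universe u

section MembershipMap

variable {X : Type*} {𝒰 : Set (Set X)}

lemma nonempty_setOf_mem_of_sUnion_eq_univ (hcov : ⋃₀ 𝒰 = Set.univ) (x : X) :
    {U : 𝒰 | x ∈ (U : Set X)}.Nonempty := by
  obtain ⟨U, hU, hxU⟩ : x ∈ ⋃₀ 𝒰 := hcov ▸ mem_univ x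
  exact ⟨⟨U, hU⟩, hxU⟩

lemma sUnion_image_val_iUnion_eq_univ (g : X → Set 𝒰)
    (hg : ∀ x, g x ⊆ {U : 𝒰 | x ∈ (U : Set X)}) (hne : ∀ x, (g x).Nonempty) :
    ⋃₀ (Subtype.val '' ⋃ x, g x) = Set.univ := by
  refine eq_univ_of_forall fun x => ?_
  obtain ⟨U, hU⟩ := hne x
  exact ⟨U, ⟨U, mem_iUnion.2 ⟨x, hU⟩, rfl⟩, hg x hU⟩

end MembershipMap

theorem stmt9_general (X : Type u) [TopologicalSpace X] (τ : Cardinal.{u})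
    (hsel : ∀ (Y : Type u) (θ : X → Set Y), (∀ x, (θ x).Nonempty) →
      (∀ y : Y, IsOpen {x | y ∈ θ x}) →
      ∃ g : X → Set Y, (∀ x, g x ⊆ θ x) ∧ (∀ x, (g x).Nonempty) ∧
        #↥(⋃ x, g x) < τ) :
    compactDegLe X τ := by
  intro 𝒰 hop hcov
  obtain ⟨g, hg, hne, hcard⟩ := hsel 𝒰 (fun x => {U : 𝒰 | x ∈ (U : Set X)})
    (nonempty_setOf_mem_of_sUnion_eq_univ hcov) (fun U => hop U U.2)
  refine ⟨Subtype.val '' ⋃ x, g x, Subtype.coe_image_subset _ _,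
    mk_image_le.trans_lt hcard, sUnion_image_val_iUnion_eq_univ g hg hne⟩

/-- if every lower semi-continuous map from `X` into a discrete
space admits a set-valued selection with image of cardinality `< τ`, then every
open cover of `X` has a subcover of cardinality `< τ`, i.e. `k(X) ≤ τ`. -/
theorem stmt9 (X : Type u) [TopologicalSpace X] (τ : Cardinal.{u}) (hτ : ℵ₀ ≤ τ)
    (hsel : ∀ (Y : Type u) (θ : X → Set Y), (∀ x, (θ x).Nonempty) →
      (∀ y : Y, IsOpen {x | y ∈ θ x}) →
      ∃ g : X → Set Y, (∀ x, g x ⊆ θ x) ∧ (∀ x, (g x).Nonempty) ∧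
        #↥(⋃ x, g x) < τ) :
    compactDegLe X τ :=
  stmt9_general X τ hsel
end

section
/- A topological space X is normal with covering dimension dim X = 0 (every finite open cover has a disjoint open refinement / the space has large inductive dimension zero with respect to pairs of disjoint closed sets) if and only if for every lower semi-continuous mapping θ from X into the two-point discrete space D = {0,1} there exists a single-valued continuous selection. -/
/-!
A continuous map `X → Bool` is the indicator of a clopen set. Hence a continuous selection of
`θ` is the same as a clopen set containing the closed set where `false` is forbidden and missing
the closed set where `true` is forbidden; these closed sets are disjoint because the values of `θ`
are nonempty. Conversely, disjoint closed sets `F₁`, `F₂` are separated by a clopen set once the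
map forbidding `false` on `F₁` and `true` on `F₂` has a continuous selection.
-/

open Set

section BoolSelection

variable {X : Type*}

theorem disjoint_setOf_notMem_of_nonempty {θ : X → Set Bool} (hne : ∀ x, (θ x).Nonempty) :
    Disjoint {x | false ∉ θ x} {x | true ∉ θ x} := by
  refine disjoint_left.mpr fun x hfalse htrue => ?_
  obtain ⟨b, hb⟩ := hne x
  cases b
  exacts [hfalse hb, htrue hb]

theorem Set.boolIndicator_mem_of_forall {θ : X → Set Bool} {H : Set X}
    (hin : ∀ x ∈ H, true ∈ θ x) (hout : ∀ x ∉ H, false ∈ θ x) (x : X) :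
    H.boolIndicator x ∈ θ x := by
  by_cases hx : x ∈ H
  · rw [(H.mem_iff_boolIndicator x).mp hx]; exact hin x hx
  · rw [(H.notMem_iff_boolIndicator x).mp hx]; exact hout x hx

/-- Forbids the value `false` on `F₁` and the value `true` on `F₂`. -/
def separationConstraint (F₁ F₂ : Set X) (x : X) : Set Bool :=
  {b | x ∉ cond b F₂ F₁}

theorem separationConstraint_nonempty {F₁ F₂ : Set X} (h : Disjoint F₁ F₂) (x : X) :
    (separationConstraint F₁ F₂ x).Nonempty := by
  by_cases hx : x ∈ F₂
  · exact ⟨false, disjoint_right.mp h hx⟩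
  · exact ⟨true, hx⟩

variable [TopologicalSpace X]

theorem isOpen_setOf_mem_separationConstraint {F₁ F₂ : Set X} (hF₁ : IsClosed F₁)
    (hF₂ : IsClosed F₂) (b : Bool) : IsOpen {x | b ∈ separationConstraint F₁ F₂ x} := by
  cases b
  exacts [hF₁.isOpen_compl, hF₂.isOpen_compl]

theorem exists_isClopen_of_mem_separationConstraint {F₁ F₂ : Set X} {f : X → Bool}
    (hf : Continuous f) (hsel : ∀ x, f x ∈ separationConstraint F₁ F₂ x) :
    ∃ H : Set X, IsClopen H ∧ F₁ ⊆ H ∧ F₂ ⊆ Hᶜ := by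
  refine ⟨f ⁻¹' {true}, (isClopen_discrete _).preimage hf, fun x hx => ?_, fun x hx hfx => ?_⟩
  · by_contra hfx
    exact hsel x (by simpa [separationConstraint, show f x = false by simpa using hfx] using hx)
  · exact hsel x (by simpa [separationConstraint, show f x = true from hfx] using hx)

end BoolSelection

/-- `X` is normal with `dim X = 0` (any two disjoint closed sets
can be separated by a clopen set) iff every lower semi-continuous map of `X`
into the two-point discrete space admits a single-valued continuous
selection. -/
theorem stmt11 (X : Type*) [TopologicalSpace X] :
    (∀ F₁ F₂ : Set X, IsClosed F₁ → IsClosed F₂ → Disjoint F₁ F₂ →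
      ∃ H : Set X, IsClopen H ∧ F₁ ⊆ H ∧ F₂ ⊆ Hᶜ) ↔
    (∀ θ : X → Set Bool, (∀ x, (θ x).Nonempty) → (∀ b : Bool, IsOpen {x | b ∈ θ x}) →
      ∃ f : X → Bool, Continuous f ∧ ∀ x, f x ∈ θ x) := by
  constructor
  · intro hsep θ hne hopen
    obtain ⟨H, hH, hfalse, htrue⟩ := hsep _ _ (hopen false).isClosed_compl
      (hopen true).isClosed_compl (disjoint_setOf_notMem_of_nonempty hne)
    refine ⟨H.boolIndicator, (continuous_boolIndicator_iff_isClopen H).mpr hH,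
      Set.boolIndicator_mem_of_forall (fun x hx => ?_) (fun x hx => ?_)⟩
    · by_contra h; exact htrue h hx
    · by_contra h; exact hx (hfalse h)
  · intro hsel F₁ F₂ hF₁ hF₂ hdisj
    obtain ⟨f, hf, hfsel⟩ := hsel _ (separationConstraint_nonempty hdisj)
      (isOpen_setOf_mem_separationConstraint hF₁ hF₂)
    exact exists_isClopen_of_mem_separationConstraint hf hfsel
end

section
/- For a set-valued mapping ψ : X → Y with nonempty values, the following are equivalent: (1) ψ∞(x) = ψ(x) for every x (where ψ∞ is the union of all iterated images); (2) ψ²(x) = ψ(x) for every x; (3) ψ(x) = ψ(y) whenever x, y ∈ X and ψ(x) ∩ ψ(y) ≠ ∅; (4) ψ⁻¹(y) = ψ⁻¹(z) whenever y, z ∈ Y and ψ⁻¹(y) ∩ ψ⁻¹(z) ≠ ∅. -/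
open Set

variable {X Y : Type*}

/-- The image of a set under a set-valued mapping. -/
def svImage (ψ : X → Set Y) (A : Set X) : Set Y := ⋃ x ∈ A, ψ x

/-- The inverse image of a set under a set-valued mapping. -/
def svPreimage (ψ : X → Set Y) (B : Set Y) : Set X := {x | ((ψ x) ∩ B).Nonempty}

/-- The iterated images: `svIter ψ 0 A = ψ(A)` is the (first) image and
`svIter ψ (n+1) A = ψ(ψ⁻¹(svIter ψ n A))` is the next one. -/
def svIter (ψ : X → Set Y) : ℕ → Set X → Set Y
  | 0, A => svImage ψ A
  | n + 1, A => svImage ψ (svPreimage ψ (svIter ψ n A))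

/-- The largest image `ψ∞(A)`. -/
def svInf (ψ : X → Set Y) (A : Set X) : Set Y := ⋃ n, svIter ψ n A

/-!
Writing `ψ⁻¹ψ(x)` for the set of points whose value meets `ψ x`, the second image is
`ψ²(x) = ⋃ {ψ w | w ∈ ψ⁻¹ψ(x)}`, which always contains `ψ x` since values are nonempty.
So `ψ²(x) = ψ(x)` for all `x` says exactly that meeting values are nested, hence (by symmetry)
equal; and once `ψ²(x) = ψ(x)` every further iterate is again `ψ(x)`. Condition (4) is
condition (3) for the converse map `y ↦ {x | y ∈ ψ x}`, and taking converses is an involution.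
-/

def IsVirtualSingleValued (ψ : X → Set Y) : Prop :=
  ∀ x x', (ψ x ∩ ψ x').Nonempty → ψ x = ψ x'

def svConverse (ψ : X → Set Y) (y : Y) : Set X := {x | y ∈ ψ x}

lemma svPreimage_singleton (ψ : X → Set Y) (y : Y) : svPreimage ψ {y} = svConverse ψ y := by
  ext x
  simp [svPreimage, svConverse]

lemma IsVirtualSingleValued.converse {ψ : X → Set Y} (h : IsVirtualSingleValued ψ) :
    IsVirtualSingleValued (svConverse ψ) := by
  rintro y z ⟨x, hyx, hzx⟩
  ext x'
  constructor
  · intro (hyx' : y ∈ ψ x')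
    show z ∈ ψ x'
    exact h x x' ⟨y, hyx, hyx'⟩ ▸ hzx
  · intro (hzx' : z ∈ ψ x')
    show y ∈ ψ x'
    exact h x x' ⟨z, hzx, hzx'⟩ ▸ hyx

lemma isVirtualSingleValued_converse_iff (ψ : X → Set Y) :
    IsVirtualSingleValued (svConverse ψ) ↔ IsVirtualSingleValued ψ :=
  ⟨fun h => h.converse, fun h => h.converse⟩

lemma svIter_zero_singleton (ψ : X → Set Y) (x : X) : svIter ψ 0 {x} = ψ x := by
  simp [svIter, svImage]

lemma svIter_one_singleton (ψ : X → Set Y) (x : X) :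
    svIter ψ 1 {x} = ⋃ (w) (_ : (ψ w ∩ ψ x).Nonempty), ψ w := by
  simp [svIter, svImage, svPreimage]

lemma subset_svIter_one_singleton {ψ : X → Set Y} (hne : ∀ x, (ψ x).Nonempty) (x : X) :
    ψ x ⊆ svIter ψ 1 {x} := by
  rw [svIter_one_singleton]
  exact subset_iUnion₂ (s := fun w (_ : (ψ w ∩ ψ x).Nonempty) => ψ w) x (by simpa using hne x)

lemma svIter_one_singleton_eq_iff {ψ : X → Set Y} (hne : ∀ x, (ψ x).Nonempty) (x : X) :
    svIter ψ 1 {x} = ψ x ↔ ∀ w, (ψ w ∩ ψ x).Nonempty → ψ w ⊆ ψ x := by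
  refine ⟨fun h w hw => ?_, fun h => ?_⟩
  · rw [← h, svIter_one_singleton]
    exact subset_iUnion₂ (s := fun w (_ : (ψ w ∩ ψ x).Nonempty) => ψ w) w hw
  · exact ((svIter_one_singleton ψ x).trans_subset (iUnion₂_subset h)).antisymm
      (subset_svIter_one_singleton hne x)

lemma forall_svIter_one_singleton_eq_iff {ψ : X → Set Y} (hne : ∀ x, (ψ x).Nonempty) :
    (∀ x, svIter ψ 1 {x} = ψ x) ↔ IsVirtualSingleValued ψ := by
  simp only [svIter_one_singleton_eq_iff hne]
  refine ⟨fun h x x' hx => (h x' x hx).antisymm (h x x' ?_), fun h x w hw => (h w x hw).le⟩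
  rwa [inter_comm]

lemma svIter_singleton_of_svIter_one {ψ : X → Set Y} (h : ∀ x, svIter ψ 1 {x} = ψ x)
    (n : ℕ) (x : X) : svIter ψ n {x} = ψ x := by
  induction n with
  | zero => exact svIter_zero_singleton ψ x
  | succ n ih =>
    change svImage ψ (svPreimage ψ (svIter ψ n {x})) = ψ x
    rw [ih]
    nth_rw 1 [← svIter_zero_singleton ψ x]
    exact h x

lemma svIter_subset_svInf (ψ : X → Set Y) (n : ℕ) (A : Set X) : svIter ψ n A ⊆ svInf ψ A :=
  subset_iUnion (fun n => svIter ψ n A) n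

/-- the four characterizations of virtual single-valued set-valued
mappings are equivalent. -/
theorem stmt13 (ψ : X → Set Y) (hne : ∀ x, (ψ x).Nonempty) :
    List.TFAE [
      ∀ x : X, svInf ψ {x} = ψ x,
      ∀ x : X, svIter ψ 1 {x} = ψ x,
      ∀ x y : X, ((ψ x) ∩ (ψ y)).Nonempty → ψ x = ψ y,
      ∀ y z : Y, (svPreimage ψ {y} ∩ svPreimage ψ {z}).Nonempty →
        svPreimage ψ {y} = svPreimage ψ {z}] := by
  tfae_have 1 → 2 := fun h x =>
    ((svIter_subset_svInf ψ 1 {x}).trans (h x).le).antisymm (subset_svIter_one_singleton hne x)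
  tfae_have 2 → 1 := fun h x => by
    simp only [svInf, svIter_singleton_of_svIter_one h, iUnion_const]
  tfae_have 2 ↔ 3 := forall_svIter_one_singleton_eq_iff hne
  tfae_have 3 ↔ 4 := by
    simp only [svPreimage_singleton]
    exact (isVirtualSingleValued_converse_iff ψ).symm
  tfae_finish
end

section
/- Let X be a paracompact (Hausdorff) space and Y ⊆ X a subspace. Then l(cl_X Y) ≤ l(Y) and k(cl_X Y) ≤ k(Y), where l is the Lindelöf number and k is the compactness degree. -/
open Set Cardinal

universe u

/-! Lift an open cover of `cl Y` to open sets `G U` of `X`. Since `X` is paracompact and normal,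
`cl Y` is covered by a locally finite open family `w` with `cl (w U) ⊆ G U`. The traces of the
`w U` cover `Y`, and if those indexed by `S` cover `Y`, local finiteness gives
`cl Y ⊆ cl (⋃ U ∈ S, w U) = ⋃ U ∈ S, cl (w U) ⊆ ⋃ U ∈ S, G U`; so `S` indexes a subcover of
the original cover that is no larger than the subcover of `Y`. -/

section Paracompact

variable {X : Type*} [TopologicalSpace X] [ParacompactSpace X] [R1Space X] {ι : Type*}

theorem exists_locallyFinite_closure_subset {s : Set X} (hs : IsClosed s) (u : ι → Set X)
    (uo : ∀ i, IsOpen (u i)) (us : s ⊆ ⋃ i, u i) :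
    ∃ w : ι → Set X, (∀ i, IsOpen (w i)) ∧ s ⊆ ⋃ i, w i ∧ LocallyFinite w ∧
      ∀ i, closure (w i) ⊆ u i := by
  obtain ⟨v, vo, sv, vlf, vu⟩ := precise_refinement_set hs u uo us
  obtain ⟨w, sw, wo, wv⟩ :=
    exists_subset_iUnion_closure_subset hs vo (fun x _ => vlf.point_finite x) sv
  exact ⟨w, wo, sw, vlf.subset fun i => subset_closure.trans (wv i),
    fun i => (wv i).trans (vu i)⟩

theorem exists_open_cover_reflecting_closure {Y : Set X} (G : ι → Set X)
    (Go : ∀ i, IsOpen (G i)) (hG : closure Y ⊆ ⋃ i, G i) :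
    ∃ w : ι → Set X, (∀ i, IsOpen (w i)) ∧ Y ⊆ ⋃ i, w i ∧
      ∀ S : Set ι, Y ⊆ ⋃ i ∈ S, w i → closure Y ⊆ ⋃ i ∈ S, G i := by
  obtain ⟨w, wo, hw, wlf, wG⟩ := exists_locallyFinite_closure_subset isClosed_closure G Go hG
  refine ⟨w, wo, subset_closure.trans hw, fun S hS => ?_⟩
  have hlf : LocallyFinite fun i : S => w i := wlf.comp_injective Subtype.val_injective
  rw [biUnion_eq_iUnion] at hS ⊢
  calc closure Y ⊆ closure (⋃ i : S, w i) := closure_mono hS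
    _ = ⋃ i : S, closure (w i) := hlf.closure_iUnion
    _ ⊆ ⋃ i : S, G i := iUnion_mono fun i => wG i

end Paracompact

def HasSubcoverCard (X : Type u) [TopologicalSpace X] (P : Cardinal.{u} → Prop) : Prop :=
  ∀ 𝒰 : Set (Set X), (∀ U ∈ 𝒰, IsOpen U) → ⋃₀ 𝒰 = Set.univ →
    ∃ 𝒱 ⊆ 𝒰, P #↥𝒱 ∧ ⋃₀ 𝒱 = Set.univ

namespace HasSubcoverCard

variable {X : Type u} [TopologicalSpace X] {P : Cardinal.{u} → Prop}

theorem of_mk_set (hP : Antitone P) (h : P #(Set X)) : HasSubcoverCard X P :=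
  fun 𝒰 _ h𝒰 => ⟨𝒰, subset_rfl, hP (mk_set_le 𝒰) h, h𝒰⟩

theorem closure [ParacompactSpace X] [R1Space X] {Y : Set X} (hP : Antitone P)
    (hY : HasSubcoverCard Y P) : HasSubcoverCard (_root_.closure Y) P := by
  intro 𝒰 𝒰o h𝒰
  have hlift : ∀ U : 𝒰, ∃ G : Set X, IsOpen G ∧ Subtype.val ⁻¹' G = U.1 :=
    fun U => isOpen_induced_iff.1 (𝒰o U U.2)
  choose G Go hGU using hlift
  have hG : _root_.closure Y ⊆ ⋃ U, G U := fun x hx => by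
    obtain ⟨U, hU, hxU⟩ := h𝒰.symm ▸ mem_univ (⟨x, hx⟩ : _root_.closure Y)
    exact mem_iUnion.2 ⟨⟨U, hU⟩, (hGU ⟨U, hU⟩).ge hxU⟩
  obtain ⟨w, wo, hw, hS⟩ := exists_open_cover_reflecting_closure G Go hG
  let V : 𝒰 → Set Y := fun U => Subtype.val ⁻¹' w U
  obtain ⟨𝒱, h𝒱V, h𝒱P, h𝒱⟩ := hY (range V)
    (forall_mem_range.2 fun U => (wo U).preimage continuous_subtype_val)
    (eq_univ_of_forall fun y => by simpa [V] using hw y.2)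
  obtain ⟨S, rfl, hSinj⟩ := exists_image_eq_injOn_of_subset_range h𝒱V
  have hYS : Y ⊆ ⋃ U ∈ S, w U := fun y hy => by
    obtain ⟨_, ⟨U, hUS, rfl⟩, hyU⟩ := h𝒱.symm ▸ mem_univ (⟨y, hy⟩ : Y)
    exact mem_biUnion hUS hyU
  refine ⟨Subtype.val '' S, image_subset_iff.2 fun U _ => U.2,
    hP (mk_image_le.trans (mk_image_eq_of_injOn V S hSinj).ge) h𝒱P, ?_⟩
  refine eq_univ_of_forall fun x => ?_
  obtain ⟨U, hUS, hxU⟩ := mem_iUnion₂.1 (hS S hYS x.2)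
  exact ⟨U, mem_image_of_mem _ hUS, (hGU U).le hxU⟩

end HasSubcoverCard

theorem lindelofLe.closure {X : Type u} [TopologicalSpace X] [ParacompactSpace X] [R1Space X]
    {Y : Set X} {τ : Cardinal.{u}} (h : lindelofLe Y τ) : lindelofLe (_root_.closure Y) τ :=
  HasSubcoverCard.closure antitone_le h

theorem compactDegLe.closure {X : Type u} [TopologicalSpace X] [ParacompactSpace X] [R1Space X]
    {Y : Set X} {τ : Cardinal.{u}} (h : compactDegLe Y τ) : compactDegLe (_root_.closure Y) τ :=
  HasSubcoverCard.closure antitone_lt h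

/-- for a paracompact Hausdorff space `X` and a subspace `Y ⊆ X`,
`l(cl Y) ≤ l(Y)` and `k(cl Y) ≤ k(Y)`. -/
theorem stmt19 (X : Type u) [TopologicalSpace X] [T2Space X] [ParacompactSpace X]
    (Y : Set X) :
    lNum ↥(closure Y) ≤ lNum ↥Y ∧ kNum ↥(closure Y) ≤ kNum ↥Y := by
  have hl : lindelofLe Y #(Set Y) := HasSubcoverCard.of_mk_set antitone_le le_rfl
  have hk : compactDegLe Y (Order.succ #(Set Y)) :=
    HasSubcoverCard.of_mk_set antitone_lt (Order.lt_succ _)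
  exact ⟨csInf_le_csInf (OrderBot.bddBelow _) ⟨_, hl⟩ fun _ => lindelofLe.closure,
    csInf_le_csInf (OrderBot.bddBelow _) ⟨_, hk⟩ fun _ => compactDegLe.closure⟩
end
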